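/- Let h ≥ 1, n = 2^h, u ∈ (0,1), and let x_1, …, x_n be real numbers. Define the exact partial sums s_{0,i} = x_i and s_{j,i} = s_{j−1,2i−1} + s_{j−1,2i} for 1 ≤ j ≤ h, 1 ≤ i ≤ 2^{h−j}, and assume s_{j,i} ≠ 0 for all such j, i; write s = s_{h,1} = Σ_{i=1}^n x_i. Let (δ_t)_{t=1}^{n−1} be random variables with |δ_t| ≤ u almost surely and E[δ_t | δ_1, …, δ_{t−1}] = 0 almost surely, and define the computed pairwise sums ŝ_{0,i} = x_i and ŝ_{j,i} = (ŝ_{j−1,2i−1} + ŝ_{j−1,2i})·(1 + δ_{t(j,i)}) where t(j,i) = (n − 2^{h−j+1}) + i enumerates the additions level by level; set ẑ = ŝ_{h,1} and K = (Σ_{i=1}^n |x_i|)/|s|. Then for every λ ∈ (0,1), with probability at least 1 − λ, |ẑ − s|/|s| ≤ K·√(u·γ_{2h}(u))·√(ln(2/λ)). -/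

import Mathlib

/-!
The computed root satisfies `ŝ - s = ∑_{(j,i)} (ŝ_{j-1,2i-1} + ŝ_{j-1,2i}) δ_{t(j,i)}`, summed over
the nodes of the tree. Since the coefficient of `δ_t` only involves `δ_1, …, δ_{t-1}` and is bounded
by `(1+u)^{j-1}` times the sum of the `|x_k|` below the node, this is a martingale with bounded
increments. The Azuma–Hoeffding argument (Hoeffding's lemma conditionally on the past, via the
convexity of `exp`) makes it sub-Gaussian with variance proxy
`u² ∑_j (1+u)^{2(j-1)} ∑_i (block sum)² ≤ (∑|x_k|)² · u γ_{2h}(u) / 2`,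
and the two-sided Chernoff bound gives the claim.
-/

open MeasureTheory ProbabilityTheory Finset Real
open scoped NNReal

lemma abs_sinh_le_cosh (x : ℝ) : |sinh x| ≤ cosh x := by
  rw [abs_sinh, ← cosh_abs]
  exact (sinh_lt_cosh _).le

lemma exp_mul_le_cosh_add_sinh_mul_div {a d u : ℝ} (hu : 0 < u) (hd : |d| ≤ u) :
    exp (a * d) ≤ cosh (a * u) + sinh (a * u) * (d / u) := by
  obtain ⟨hd₁, hd₂⟩ := abs_le.1 hd
  -- `a * d` is the convex combination of `-(a * u)` and `a * u` with weights `(u ∓ d) / (2 * u)`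
  have key := convexOn_exp.2 (Set.mem_univ (-(a * u))) (Set.mem_univ (a * u))
    (div_nonneg (sub_nonneg.2 hd₂) (by positivity) : 0 ≤ (u - d) / (2 * u))
    (div_nonneg (by linarith) (by positivity) : 0 ≤ (u + d) / (2 * u))
    (by field_simp; ring)
  simp only [smul_eq_mul] at key
  have hlhs : (u - d) / (2 * u) * -(a * u) + (u + d) / (2 * u) * (a * u) = a * d := by
    field_simp; ring
  have hrhs : (u - d) / (2 * u) * exp (-(a * u)) + (u + d) / (2 * u) * exp (a * u) =
      cosh (a * u) + sinh (a * u) * (d / u) := by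
    rw [cosh_eq, sinh_eq]; field_simp; ring
  rwa [hlhs, hrhs] at key

lemma sq_mul_geom_sum_le {u : ℝ} (hu : 0 ≤ u) (h : ℕ) :
    u ^ 2 * ∑ j ∈ range h, ((1 + u) ^ 2) ^ j ≤ u * ((1 + u) ^ (2 * h) - 1) / 2 := by
  have hG : 0 ≤ ∑ j ∈ range h, ((1 + u) ^ 2) ^ j := sum_nonneg fun _ _ ↦ by positivity
  rw [pow_mul, ← geom_sum_mul]
  nlinarith [mul_nonneg (pow_nonneg hu 3) hG]

lemma sum_Icc_two_mul {M : Type*} [AddCommMonoid M] (f : ℕ → M) (N : ℕ) :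
    ∑ i ∈ Icc 1 (2 * N), f i = ∑ i ∈ Icc 1 N, (f (2 * i - 1) + f (2 * i)) := by
  induction N with
  | zero => simp
  | succ N ih =>
    rw [show 2 * (N + 1) = 2 * N + 1 + 1 by ring, sum_Icc_succ_top (by omega),
      sum_Icc_succ_top (by omega), ih, sum_Icc_succ_top (by omega), add_assoc]
    congr 3

section Martingale

variable {Ω : Type*} {m m0 : MeasurableSpace Ω} {μ : Measure Ω}

lemma integral_mul_eq_zero_of_condExp_eq_zero [IsFiniteMeasure μ] (hm : m ≤ m0) {g d : Ω → ℝ}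
    (hg : StronglyMeasurable[m] g) (hgd : Integrable (g * d) μ) (hd : Integrable d μ)
    (hmean : μ[d | m] =ᵐ[μ] 0) : ∫ ω, (g * d) ω ∂μ = 0 := by
  rw [← integral_condExp hm,
    integral_congr_ae ((condExp_mul_of_stronglyMeasurable_left hg hgd hd).trans ?_), integral_zero]
  filter_upwards [hmean] with ω hω
  simp [hω]

lemma integral_exp_add_mul_le [IsProbabilityMeasure μ] (hm : m ≤ m0) {W A d : Ω → ℝ} {c u : ℝ}
    (hu : 0 < u) (hW : Measurable[m] W) (hWi : Integrable (fun ω ↦ exp (W ω)) μ)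
    (hA : Measurable[m] A) (hAb : ∀ᵐ ω ∂μ, |A ω| ≤ c)
    (hd : Measurable d) (hdb : ∀ᵐ ω ∂μ, |d ω| ≤ u) (hmean : μ[d | m] =ᵐ[μ] 0) :
    Integrable (fun ω ↦ exp (W ω + A ω * d ω)) μ ∧
      ∫ ω, exp (W ω + A ω * d ω) ∂μ ≤ exp (c ^ 2 * u ^ 2 / 2) * ∫ ω, exp (W ω) ∂μ := by
  set K := exp (c ^ 2 * u ^ 2 / 2)
  have hW' : Measurable W := hW.mono hm le_rfl
  have hA' : Measurable A := hA.mono hm le_rfl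
  have hcosh : ∀ᵐ ω ∂μ, cosh (A ω * u) ≤ K := by
    filter_upwards [hAb] with ω hω
    refine (cosh_le_exp_half_sq _).trans (exp_le_exp.2 ?_)
    have : A ω ^ 2 ≤ c ^ 2 := by
      rw [← sq_abs]; exact pow_le_pow_left₀ (abs_nonneg _) hω 2
    nlinarith [sq_nonneg u]
  set f : Ω → ℝ := fun ω ↦ exp (W ω) * cosh (A ω * u)
  set g : Ω → ℝ := fun ω ↦ exp (W ω) * sinh (A ω * u)
  have hf : Integrable f μ := by
    refine (hWi.const_mul K).mono' (by fun_prop) ?_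
    filter_upwards [hcosh] with ω hω
    rw [norm_of_nonneg (by positivity), mul_comm K]
    exact mul_le_mul_of_nonneg_left hω (exp_pos _).le
  have hgd : Integrable (g * d) μ := by
    refine (hWi.const_mul (K * u)).mono' (by fun_prop) ?_
    filter_upwards [hcosh, hdb] with ω hω hdω
    simp only [Pi.mul_apply, g, norm_mul, norm_eq_abs, abs_exp]
    calc exp (W ω) * |sinh (A ω * u)| * |d ω| ≤ exp (W ω) * K * u := by
          gcongr
          exact (abs_sinh_le_cosh _).trans hω
      _ = K * u * exp (W ω) := by ring
  have hzero : ∫ ω, (g * d) ω ∂μ = 0 :=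
    integral_mul_eq_zero_of_condExp_eq_zero hm (by fun_prop)
      hgd ((integrable_const u).mono' hd.aestronglyMeasurable (by simpa using hdb)) hmean
  have hbound : ∀ᵐ ω ∂μ, exp (W ω + A ω * d ω) ≤ f ω + (g * d) ω / u := by
    filter_upwards [hdb] with ω hω
    rw [exp_add]
    calc exp (W ω) * exp (A ω * d ω)
        ≤ exp (W ω) * (cosh (A ω * u) + sinh (A ω * u) * (d ω / u)) := by
          gcongr; exact exp_mul_le_cosh_add_sinh_mul_div hu hω
      _ = f ω + (g * d) ω / u := by simp only [f, g, Pi.mul_apply]; ring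
  have hdom : Integrable (fun ω ↦ f ω + (g * d) ω / u) μ := hf.add (hgd.div_const u)
  have hint : Integrable (fun ω ↦ exp (W ω + A ω * d ω)) μ := by
    refine hdom.mono' (by fun_prop) ?_
    filter_upwards [hbound] with ω hω
    rwa [norm_of_nonneg (exp_pos _).le]
  refine ⟨hint, ?_⟩
  calc ∫ ω, exp (W ω + A ω * d ω) ∂μ ≤ ∫ ω, (f ω + (g * d) ω / u) ∂μ :=
        integral_mono_ae hint hdom hbound
    _ = ∫ ω, f ω ∂μ := by
        rw [integral_add hf (hgd.div_const u), integral_div, hzero, zero_div, add_zero]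
    _ ≤ ∫ ω, K * exp (W ω) ∂μ := by
        refine integral_mono_ae hf (hWi.const_mul K) ?_
        filter_upwards [hcosh] with ω hω
        rw [mul_comm K]
        exact mul_le_mul_of_nonneg_left hω (exp_pos _).le
    _ = K * ∫ ω, exp (W ω) ∂μ := integral_const_mul K _

lemma hasSubgaussianMGF_sum_mul [IsProbabilityMeasure μ] {ι : Type*} (ℱ : Filtration ℕ m0)
    (s : Finset ι) {τ : ι → ℕ} (hτ : Set.InjOn τ s) {A d : ι → Ω → ℝ} {c : ι → ℝ} {u : ℝ}
    (hu : 0 < u) (hA : ∀ k ∈ s, Measurable[ℱ (τ k - 1)] (A k))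
    (hAb : ∀ k ∈ s, ∀ᵐ ω ∂μ, |A k ω| ≤ c k) (hd : ∀ k ∈ s, Measurable[ℱ (τ k)] (d k))
    (hdb : ∀ k ∈ s, ∀ᵐ ω ∂μ, |d k ω| ≤ u) (hmean : ∀ k ∈ s, μ[d k | ℱ (τ k - 1)] =ᵐ[μ] 0) :
    HasSubgaussianMGF (fun ω ↦ ∑ k ∈ s, A k ω * d k ω) (u ^ 2 * ∑ k ∈ s, c k ^ 2).toNNReal μ := by
  classical
  suffices key : ∀ v : ℝ, Integrable (fun ω ↦ exp (v * ∑ k ∈ s, A k ω * d k ω)) μ ∧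
      ∫ ω, exp (v * ∑ k ∈ s, A k ω * d k ω) ∂μ ≤ exp (u ^ 2 * (∑ k ∈ s, c k ^ 2) * v ^ 2 / 2) by
    refine ⟨fun v ↦ (key v).1, fun v ↦ ?_⟩
    rw [Real.coe_toNNReal _ (by positivity)]
    exact (key v).2
  intro v
  -- Peel off the increment with the latest time `τ a`: by injectivity of `τ` the rest of the sum
  -- is `ℱ (τ a - 1)`-measurable, so the conditional Hoeffding step applies.
  induction s using Finset.induction_on_max_value τ with
  | empty => simp
  | insert a s has hmax ih =>
    have hlt : ∀ k ∈ s, τ k < τ a := fun k hk ↦ (hmax k hk).lt_of_ne fun h ↦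
      has (hτ (mem_insert_of_mem hk) (mem_insert_self a s) h ▸ hk)
    obtain ⟨hint, hmgf⟩ := ih (hτ.mono (by simp)) (fun k hk ↦ hA k (mem_insert_of_mem hk))
      (fun k hk ↦ hAb k (mem_insert_of_mem hk)) (fun k hk ↦ hd k (mem_insert_of_mem hk))
      (fun k hk ↦ hdb k (mem_insert_of_mem hk)) (fun k hk ↦ hmean k (mem_insert_of_mem hk))
    have hWmeas : Measurable[ℱ (τ a - 1)] (fun ω ↦ v * ∑ k ∈ s, A k ω * d k ω) := by
      refine (Finset.measurable_sum _ fun k hk ↦ ?_).const_mul v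
      have hle : τ k ≤ τ a - 1 := by have := hlt k hk; omega
      exact ((hA k (mem_insert_of_mem hk)).mono (ℱ.mono (by omega)) le_rfl).mul
        ((hd k (mem_insert_of_mem hk)).mono (ℱ.mono hle) le_rfl)
    have hstep := integral_exp_add_mul_le (ℱ.le (τ a - 1)) (c := |v| * c a) hu hWmeas hint
      ((hA a (mem_insert_self a s)).const_mul v) ?_
      ((hd a (mem_insert_self a s)).mono (ℱ.le _) le_rfl) (hdb a (mem_insert_self a s))
      (hmean a (mem_insert_self a s))
    · have hsum : ∀ ω, v * ∑ k ∈ insert a s, A k ω * d k ω =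
          v * ∑ k ∈ s, A k ω * d k ω + v * A a ω * d a ω := fun ω ↦ by
        rw [sum_insert has]; ring
      simp only [hsum]
      refine ⟨hstep.1, hstep.2.trans ?_⟩
      calc exp ((|v| * c a) ^ 2 * u ^ 2 / 2) * ∫ ω, exp (v * ∑ k ∈ s, A k ω * d k ω) ∂μ
          ≤ exp ((|v| * c a) ^ 2 * u ^ 2 / 2) * exp (u ^ 2 * (∑ k ∈ s, c k ^ 2) * v ^ 2 / 2) := by
            gcongr
        _ = exp (u ^ 2 * (∑ k ∈ insert a s, c k ^ 2) * v ^ 2 / 2) := by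
            rw [← exp_add, sum_insert has, mul_pow, sq_abs]; ring_nf
    · filter_upwards [hAb a (mem_insert_self a s)] with ω hω
      rw [abs_mul]
      exact mul_le_mul_of_nonneg_left hω (abs_nonneg v)

lemma ProbabilityTheory.HasSubgaussianMGF.mono {X : Ω → ℝ} {c c' : ℝ≥0}
    (hX : HasSubgaussianMGF X c μ) (hc : c ≤ c') : HasSubgaussianMGF X c' μ :=
  ⟨hX.integrable_exp_mul, fun t ↦ (hX.mgf_le t).trans (exp_le_exp.2 (by gcongr))⟩

lemma ProbabilityTheory.HasSubgaussianMGF.ofReal_one_sub_le_measure_abs_le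
    [IsProbabilityMeasure μ] {X : Ω → ℝ} {c : ℝ≥0} (hX : HasSubgaussianMGF X c μ) (hc : 0 < c)
    {lam : ℝ} (hlam0 : 0 < lam) (hlam1 : lam ≤ 1) :
    ENNReal.ofReal (1 - lam) ≤ μ {ω | |X ω| ≤ √(2 * c * log (2 / lam))} := by
  set ε := √(2 * c * log (2 / lam))
  have hL : 0 ≤ log (2 / lam) := log_nonneg (by rw [le_div_iff₀ hlam0]; linarith)
  have htail : exp (-ε ^ 2 / (2 * c)) = lam / 2 := by
    rw [sq_sqrt (by positivity), neg_div, mul_div_cancel_left₀ _ (by positivity), exp_neg,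
      exp_log (by positivity), inv_div]
  have hright := hX.measure_ge_le (sqrt_nonneg _ : 0 ≤ ε)
  have hleft := hX.neg.measure_ge_le (sqrt_nonneg _ : 0 ≤ ε)
  rw [htail] at hright hleft
  have hcompl : {ω | |X ω| ≤ ε}ᶜ ⊆ {ω | ε ≤ X ω} ∪ {ω | ε ≤ (-X) ω} := by
    intro ω hω
    simp only [Set.mem_compl_iff, Set.mem_ofPred_eq, not_le, Set.mem_union, Pi.neg_apply] at hω ⊢
    rcases lt_abs.1 hω with h | h
    exacts [Or.inl h.le, Or.inr h.le]
  have hμcompl : μ {ω | |X ω| ≤ ε}ᶜ ≤ ENNReal.ofReal lam := by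
    calc μ {ω | |X ω| ≤ ε}ᶜ ≤ μ {ω | ε ≤ X ω} + μ {ω | ε ≤ (-X) ω} :=
          (measure_mono hcompl).trans (measure_union_le _ _)
      _ ≤ ENNReal.ofReal (lam / 2) + ENNReal.ofReal (lam / 2) := by
          rw [← ofReal_measureReal, ← ofReal_measureReal]
          gcongr
      _ = ENNReal.ofReal lam := by
          rw [← ENNReal.ofReal_add (by positivity) (by positivity)]; ring_nf
  refine ENNReal.le_of_add_le_add_right (ENNReal.ofReal_ne_top (r := lam)) ?_
  calc ENNReal.ofReal (1 - lam) + ENNReal.ofReal lam = μ Set.univ := by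
        rw [← ENNReal.ofReal_add (by linarith) hlam0.le, measure_univ]; norm_num
    _ ≤ μ {ω | |X ω| ≤ ε} + μ {ω | |X ω| ≤ ε}ᶜ := by
        rw [← Set.union_compl_self {ω | |X ω| ≤ ε}]; exact measure_union_le _ _
    _ ≤ μ {ω | |X ω| ≤ ε} + ENNReal.ofReal lam := by gcongr

end Martingale

def childSum {α : Type*} [Add α] (a : ℕ → ℕ → α) (j i : ℕ) : α :=
  a (j - 1) (2 * i - 1) + a (j - 1) (2 * i)

structure IsPairwiseSumTree (h : ℕ) (x : ℕ → ℝ) (e a : ℕ → ℕ → ℝ) : Prop where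
  leaf : ∀ i, 1 ≤ i → i ≤ 2 ^ h → a 0 i = x i
  node : ∀ j i, 1 ≤ j → j ≤ h → 1 ≤ i → i ≤ 2 ^ (h - j) →
    a j i = childSum a j i * (1 + e j i)

def nodes (h : ℕ) : Finset ((_ : ℕ) × ℕ) :=
  (Icc 1 h).sigma fun j ↦ Icc 1 (2 ^ (h - j))

lemma mem_nodes {h : ℕ} {p : (_ : ℕ) × ℕ} :
    p ∈ nodes h ↔ 1 ≤ p.1 ∧ p.1 ≤ h ∧ 1 ≤ p.2 ∧ p.2 ≤ 2 ^ (h - p.1) := by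
  simp [nodes, and_assoc]

-- The sum of `f` over the leaves `(i - 1) * 2 ^ j + 1, …, i * 2 ^ j` below the node `(j, i)`.
def blockSum (f : ℕ → ℝ) (j i : ℕ) : ℝ :=
  ∑ k ∈ Ioc ((i - 1) * 2 ^ j) (i * 2 ^ j), f k

lemma blockSum_zero (f : ℕ → ℝ) {i : ℕ} (hi : 1 ≤ i) : blockSum f 0 i = f i := by
  obtain ⟨i, rfl⟩ := Nat.exists_eq_add_of_le' hi
  simp [blockSum, Nat.Ioc_succ_singleton]

lemma childSum_blockSum (f : ℕ → ℝ) {j i : ℕ} (hj : 1 ≤ j) (hi : 1 ≤ i) :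
    childSum (blockSum f) j i = blockSum f j i := by
  obtain ⟨j, rfl⟩ := Nat.exists_eq_add_of_le' hj
  simp only [childSum, blockSum, Nat.add_sub_cancel]
  rw [sum_Ioc_consecutive _ (Nat.mul_le_mul_right _ (by omega))
    (Nat.mul_le_mul_right _ (by omega)), show 2 * i - 1 - 1 = 2 * (i - 1) by omega, pow_succ]
  ring_nf

lemma sum_blockSum (f : ℕ → ℝ) (j N : ℕ) :
    ∑ i ∈ Icc 1 N, blockSum f j i = ∑ k ∈ Icc 1 (N * 2 ^ j), f k := by
  induction N with
  | zero => simp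
  | succ N ih =>
    have hIoc (M : ℕ) : Icc 1 M = Ioc 0 M := Icc_add_one_left_eq_Ioc 0 M
    rw [sum_Icc_succ_top (by omega), ih, blockSum, Nat.add_sub_cancel, hIoc, hIoc,
      sum_Ioc_consecutive _ (Nat.zero_le _) (Nat.mul_le_mul_right _ (by omega))]

lemma sum_nodes_sq_le {u : ℝ} (hu : 0 ≤ u) (x : ℕ → ℝ) (h : ℕ) :
    u ^ 2 * ∑ p ∈ nodes h, ((1 + u) ^ (p.1 - 1) * blockSum (|x ·|) p.1 p.2) ^ 2 ≤
      (∑ k ∈ Icc 1 (2 ^ h), |x k|) ^ 2 * (u * ((1 + u) ^ (2 * h) - 1)) / 2 := by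
  set S := ∑ k ∈ Icc 1 (2 ^ h), |x k|
  have hlevel : ∀ j ∈ Icc 1 h, ∑ i ∈ Icc 1 (2 ^ (h - j)),
      ((1 + u) ^ (j - 1) * blockSum (|x ·|) j i) ^ 2 ≤ ((1 + u) ^ 2) ^ (j - 1) * S ^ 2 := by
    intro j hj
    have htotal : ∑ i ∈ Icc 1 (2 ^ (h - j)), blockSum (|x ·|) j i = S := by
      rw [sum_blockSum, ← pow_add, Nat.sub_add_cancel (mem_Icc.1 hj).2]
    simp_rw [mul_pow, ← mul_sum, ← pow_mul, mul_comm (j - 1) 2, pow_mul]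
    gcongr
    rw [← htotal]
    exact sum_sq_le_sq_sum_of_nonneg fun _ _ ↦ sum_nonneg fun _ _ ↦ abs_nonneg _
  have hgeom : ∑ j ∈ Icc 1 h, ((1 + u) ^ 2) ^ (j - 1) = ∑ j ∈ range h, ((1 + u) ^ 2) ^ j := by
    rw [← Ico_add_one_right_eq_Icc, sum_Ico_eq_sum_range]
    simp
  calc u ^ 2 * ∑ p ∈ nodes h, ((1 + u) ^ (p.1 - 1) * blockSum (|x ·|) p.1 p.2) ^ 2
      ≤ u ^ 2 * ∑ j ∈ Icc 1 h, ((1 + u) ^ 2) ^ (j - 1) * S ^ 2 := by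
        rw [nodes, sum_sigma]
        gcongr with j hj
        exact hlevel j hj
    _ = S ^ 2 * (u ^ 2 * ∑ j ∈ range h, ((1 + u) ^ 2) ^ j) := by
        rw [← sum_mul, hgeom]; ring
    _ ≤ S ^ 2 * (u * ((1 + u) ^ (2 * h) - 1) / 2) := by
        gcongr; exact sq_mul_geom_sum_le hu h
    _ = S ^ 2 * (u * ((1 + u) ^ (2 * h) - 1)) / 2 := by ring

namespace IsPairwiseSumTree

variable {h : ℕ} {x : ℕ → ℝ} {e a : ℕ → ℕ → ℝ}

lemma sum_level_succ (ht : IsPairwiseSumTree h x e a) {j : ℕ} (hj : j < h) :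
    ∑ i ∈ Icc 1 (2 ^ (h - (j + 1))), a (j + 1) i =
      ∑ i ∈ Icc 1 (2 ^ (h - j)), a j i +
        ∑ i ∈ Icc 1 (2 ^ (h - (j + 1))), childSum a (j + 1) i * e (j + 1) i := by
  rw [show h - j = h - (j + 1) + 1 by omega, pow_succ', sum_Icc_two_mul, ← sum_add_distrib]
  refine sum_congr rfl fun i hi ↦ ?_
  rw [mem_Icc] at hi
  rw [ht.node (j + 1) i (by omega) hj hi.1 hi.2]
  simp only [childSum, Nat.add_sub_cancel]
  ring

lemma root_eq (ht : IsPairwiseSumTree h x e a) :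
    a h 1 = ∑ i ∈ Icc 1 (2 ^ h), x i +
      ∑ j ∈ Icc 1 h, ∑ i ∈ Icc 1 (2 ^ (h - j)), childSum a j i * e j i := by
  suffices ∀ k ≤ h, ∑ i ∈ Icc 1 (2 ^ (h - k)), a k i = ∑ i ∈ Icc 1 (2 ^ h), x i +
      ∑ j ∈ Icc 1 k, ∑ i ∈ Icc 1 (2 ^ (h - j)), childSum a j i * e j i by
    simpa using this h le_rfl
  intro k hk
  induction k with
  | zero =>
    rw [Icc_eq_empty_of_lt zero_lt_one, sum_empty, add_zero, Nat.sub_zero]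
    exact sum_congr rfl fun i hi ↦ ht.leaf i (mem_Icc.1 hi).1 (mem_Icc.1 hi).2
  | succ k ih =>
    rw [ht.sum_level_succ (by omega), ih (by omega), sum_Icc_succ_top (by omega), add_assoc]

lemma root_sub_root_eq {b : ℕ → ℕ → ℝ} (ha : IsPairwiseSumTree h x e a)
    (hb : IsPairwiseSumTree h x 0 b) :
    a h 1 - b h 1 = ∑ p ∈ nodes h, childSum a p.1 p.2 * e p.1 p.2 := by
  rw [ha.root_eq, hb.root_eq, nodes, sum_sigma]
  simp

lemma abs_le (ht : IsPairwiseSumTree h x e a) {u : ℝ}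
    (he : ∀ j i, 1 ≤ j → j ≤ h → 1 ≤ i → i ≤ 2 ^ (h - j) → |e j i| ≤ u) {j i : ℕ} (hj : j ≤ h)
    (hi : 1 ≤ i) (hih : i ≤ 2 ^ (h - j)) : |a j i| ≤ (1 + u) ^ j * blockSum (|x ·|) j i := by
  induction j generalizing i with
  | zero => rw [ht.leaf i hi (by simpa using hih), blockSum_zero _ hi, pow_zero, one_mul]
  | succ j ih =>
    have hpow : 2 ^ (h - j) = 2 * 2 ^ (h - (j + 1)) := by
      rw [← pow_succ']; congr 1; omega
    have hu : 0 ≤ u := (abs_nonneg _).trans (he (j + 1) i (by omega) hj hi hih)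
    have hchild : |childSum a (j + 1) i| ≤ (1 + u) ^ j * blockSum (|x ·|) (j + 1) i := by
      rw [← childSum_blockSum _ (by omega) hi, childSum, childSum, Nat.add_sub_cancel, mul_add]
      exact (abs_add_le _ _).trans (add_le_add (ih (by omega) (by omega) (by omega))
        (ih (by omega) (by omega) (by omega)))
    rw [ht.node (j + 1) i (by omega) hj hi hih, abs_mul, pow_succ, mul_right_comm]
    refine mul_le_mul hchild ((abs_add_le _ _).trans ?_) (abs_nonneg _)
      (mul_nonneg (by positivity) (sum_nonneg fun _ _ ↦ abs_nonneg _))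
    rw [abs_one]
    linarith [he (j + 1) i (by omega) hj hi hih]

lemma abs_childSum_le (ht : IsPairwiseSumTree h x e a) {u : ℝ}
    (he : ∀ j i, 1 ≤ j → j ≤ h → 1 ≤ i → i ≤ 2 ^ (h - j) → |e j i| ≤ u) {j i : ℕ} (hj : 1 ≤ j)
    (hjh : j ≤ h) (hi : 1 ≤ i) (hih : i ≤ 2 ^ (h - j)) :
    |childSum a j i| ≤ (1 + u) ^ (j - 1) * blockSum (|x ·|) j i := by
  have hpow : 2 ^ (h - (j - 1)) = 2 * 2 ^ (h - j) := by
    rw [← pow_succ']; congr 1; omega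
  rw [← childSum_blockSum _ hj hi, childSum, childSum, mul_add]
  exact (abs_add_le _ _).trans (add_le_add (ht.abs_le he (by omega) (by omega) (by omega))
    (ht.abs_le he (by omega) (by omega) (by omega)))

end IsPairwiseSumTree

-- Level `j` uses the consecutive indices `2 ^ h - 2 ^ (h - j + 1) + 1, …, 2 ^ h - 2 ^ (h - j)`.
def errIndex (h j i : ℕ) : ℕ := 2 ^ h - 2 ^ (h - j + 1) + i

lemma errIndex_lt {h j j' i i' : ℕ} (hj' : 1 ≤ j') (hjj : j' < j) (hjh : j ≤ h)
    (hi' : i' ≤ 2 ^ (h - j')) (hi : 1 ≤ i) : errIndex h j' i' < errIndex h j i := by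
  have h₁ : 2 ^ (h - j' + 1) ≤ 2 ^ h := Nat.pow_le_pow_right two_pos (by omega)
  have h₂ : 2 ^ (h - j + 1) ≤ 2 ^ (h - j') := Nat.pow_le_pow_right two_pos (by omega)
  have h₃ : 2 ^ (h - j' + 1) = 2 * 2 ^ (h - j') := pow_succ' 2 _
  unfold errIndex
  omega

lemma errIndex_mem_Icc {h j i : ℕ} (hj : 1 ≤ j) (hjh : j ≤ h) (hi : 1 ≤ i)
    (hih : i ≤ 2 ^ (h - j)) : errIndex h j i ∈ Set.Icc 1 (2 ^ h - 1) := by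
  have h₁ : 2 ^ (h - j + 1) ≤ 2 ^ h := Nat.pow_le_pow_right two_pos (by omega)
  have h₂ : 2 ^ (h - j + 1) = 2 * 2 ^ (h - j) := pow_succ' 2 _
  have h₃ : 0 < 2 ^ (h - j) := by positivity
  simp only [errIndex, Set.mem_Icc]
  omega

lemma injOn_errIndex (h : ℕ) :
    Set.InjOn (fun p : (_ : ℕ) × ℕ ↦ errIndex h p.1 p.2) (nodes h) := by
  rintro ⟨j, i⟩ hp ⟨j', i'⟩ hq heq
  simp only [mem_coe, mem_nodes] at hp hq heq
  rcases lt_trichotomy j j' with hlt | rfl | hlt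
  · exact absurd heq (errIndex_lt hp.1 hlt hq.2.1 hp.2.2.2 hq.2.2.1).ne
  · simp only [errIndex, Nat.add_left_cancel_iff] at heq
    rw [heq]
  · exact absurd heq (errIndex_lt hq.1 hlt hp.2.1 hq.2.2.2 hp.2.2.1).ne'

def MeasureTheory.Filtration.naturalFromOne {Ω : Type*} {m0 : MeasurableSpace Ω}
    (δ : ℕ → Ω → ℝ) (hδ : ∀ t, Measurable (δ t)) : Filtration ℕ m0 where
  seq t := ⨆ r ∈ Set.Icc 1 t, MeasurableSpace.comap (δ r) inferInstance
  mono' _ _ hst := biSup_mono fun _ hr ↦ ⟨hr.1, hr.2.trans hst⟩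
  le' _ := iSup₂_le fun r _ ↦ (hδ r).comap_le

lemma MeasureTheory.Filtration.measurable_naturalFromOne {Ω : Type*} {m0 : MeasurableSpace Ω}
    {δ : ℕ → Ω → ℝ} (hδ : ∀ t, Measurable (δ t)) {t : ℕ} (ht : 1 ≤ t) :
    Measurable[naturalFromOne δ hδ t] (δ t) :=
  Measurable.of_comap_le (le_biSup (fun r ↦ MeasurableSpace.comap (δ r) inferInstance)
    (⟨ht, le_rfl⟩ : t ∈ Set.Icc 1 t))

namespace IsPairwiseSumTree

variable {Ω : Type*} {m0 : MeasurableSpace Ω} {μ : Measure Ω} {h : ℕ} {x : ℕ → ℝ}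
  {δ : ℕ → Ω → ℝ} {a : ℕ → ℕ → Ω → ℝ}

-- Leaves are constants, so no condition on `T` is needed for them (for `j = 0` the truncated
-- subtraction makes `errIndex h 0 i = i` meaningless).
lemma measurable (ℱ : Filtration ℕ m0)
    (ht : ∀ ω, IsPairwiseSumTree h x (fun j i ↦ δ (errIndex h j i) ω) (fun j i ↦ a j i ω))
    (hδ : ∀ t, 1 ≤ t → Measurable[ℱ t] (δ t)) {j i T : ℕ} (hjh : j ≤ h) (hi : 1 ≤ i)
    (hih : i ≤ 2 ^ (h - j)) (hT : 1 ≤ j → errIndex h j i ≤ T) : Measurable[ℱ T] (a j i) := by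
  induction j generalizing i T with
  | zero =>
    have : a 0 i = fun _ ↦ x i := funext fun ω ↦ (ht ω).leaf i hi (by simpa using hih)
    rw [this]
    exact measurable_const
  | succ j ih =>
    have hpow : 2 ^ (h - j) = 2 * 2 ^ (h - (j + 1)) := by
      rw [← pow_succ']; congr 1; omega
    have hchild : ∀ i', i' ≤ 2 * i → 2 * i - 1 ≤ i' → Measurable[ℱ T] (a j i') := fun i' h₁ h₂ ↦
      ih (by omega) (by omega) (by omega) fun hj ↦
        ((errIndex_lt hj (Nat.lt_succ_self j) hjh (by omega) hi).trans_le (hT (by omega))).le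
    have : a (j + 1) i = fun ω ↦ (a j (2 * i - 1) ω + a j (2 * i) ω) *
        (1 + δ (errIndex h (j + 1) i) ω) :=
      funext fun ω ↦ (ht ω).node (j + 1) i (by omega) hjh hi hih
    rw [this]
    exact ((hchild _ (by omega) le_rfl).add (hchild _ le_rfl (by omega))).mul
      (measurable_const.add ((hδ _ (errIndex_mem_Icc (by omega) hjh hi hih).1).mono
        (ℱ.mono (hT (by omega))) le_rfl))

lemma measurable_childSum (ℱ : Filtration ℕ m0)
    (ht : ∀ ω, IsPairwiseSumTree h x (fun j i ↦ δ (errIndex h j i) ω) (fun j i ↦ a j i ω))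
    (hδ : ∀ t, 1 ≤ t → Measurable[ℱ t] (δ t)) {j i : ℕ} (hj : 1 ≤ j) (hjh : j ≤ h) (hi : 1 ≤ i)
    (hih : i ≤ 2 ^ (h - j)) : Measurable[ℱ (errIndex h j i - 1)] (childSum a j i) := by
  have hpow : 2 ^ (h - (j - 1)) = 2 * 2 ^ (h - j) := by
    rw [← pow_succ']; congr 1; omega
  have hchild : ∀ i', i' ≤ 2 * i → 2 * i - 1 ≤ i' →
      Measurable[ℱ (errIndex h j i - 1)] (a (j - 1) i') := fun i' h₁ h₂ ↦
    IsPairwiseSumTree.measurable ℱ ht hδ (by omega) (by omega) (by omega) fun hj' ↦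
      Nat.le_sub_one_of_lt (errIndex_lt hj' (by omega) hjh (by omega) hi)
  exact (hchild _ (by omega) le_rfl).add (hchild _ le_rfl (by omega))

lemma hasSubgaussianMGF_root_sub [IsProbabilityMeasure μ] (ℱ : Filtration ℕ m0) {b : ℕ → ℕ → ℝ}
    {u : ℝ} (hu : 0 < u)
    (ha : ∀ ω, IsPairwiseSumTree h x (fun j i ↦ δ (errIndex h j i) ω) (fun j i ↦ a j i ω))
    (hb : IsPairwiseSumTree h x 0 b) (hδ : ∀ t, 1 ≤ t → Measurable[ℱ t] (δ t))
    (hδb : ∀ t ∈ Set.Icc 1 (2 ^ h - 1), ∀ᵐ ω ∂μ, |δ t ω| ≤ u)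
    (hmean : ∀ t ∈ Set.Icc 1 (2 ^ h - 1), μ[δ t | ℱ (t - 1)] =ᵐ[μ] 0) :
    HasSubgaussianMGF (fun ω ↦ a h 1 ω - b h 1)
      ((∑ k ∈ Icc 1 (2 ^ h), |x k|) ^ 2 * (u * ((1 + u) ^ (2 * h) - 1)) / 2).toNNReal μ := by
  have hgood : ∀ᵐ ω ∂μ, ∀ t ∈ Set.Icc 1 (2 ^ h - 1), |δ t ω| ≤ u :=
    (ae_ball_iff (Set.to_countable _)).2 hδb
  simp_rw [(ha _).root_sub_root_eq hb]
  refine (hasSubgaussianMGF_sum_mul ℱ (nodes h) (injOn_errIndex h) hu (fun p hp ↦ ?_)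
    (fun p hp ↦ ?_) (fun p hp ↦ ?_) (fun p hp ↦ ?_) (fun p hp ↦ ?_)).mono
    (Real.toNNReal_le_toNNReal (sum_nodes_sq_le hu.le x h))
  all_goals obtain ⟨hj, hjh, hi, hih⟩ := mem_nodes.1 hp
  · exact measurable_childSum ℱ ha hδ hj hjh hi hih
  · filter_upwards [hgood] with ω hω
    exact (ha ω).abs_childSum_le (fun j i hj hjh hi hih ↦ hω _ (errIndex_mem_Icc hj hjh hi hih))
      hj hjh hi hih
  · exact hδ _ (errIndex_mem_Icc hj hjh hi hih).1
  · exact hδb _ (errIndex_mem_Icc hj hjh hi hih)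
  · exact hmean _ (errIndex_mem_Icc hj hjh hi hih)

end IsPairwiseSumTree

theorem pairwise_summation_sr_bound_general
    {Ω : Type*} {m0 : MeasurableSpace Ω} (μ : Measure Ω) [IsProbabilityMeasure μ]
    (h : ℕ) (hh : 1 ≤ h) (n : ℕ) (hn : n = 2 ^ h)
    (u : ℝ) (hu0 : 0 < u)
    (x : ℕ → ℝ)
    -- exact partial sums
    (s : ℕ → ℕ → ℝ)
    (hs0 : ∀ i, 1 ≤ i → i ≤ n → s 0 i = x i)
    (hsrec : ∀ j i, 1 ≤ j → j ≤ h → 1 ≤ i → i ≤ 2 ^ (h - j) →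
      s j i = s (j - 1) (2 * i - 1) + s (j - 1) (2 * i))
    (hsne : ∀ j i, 1 ≤ j → j ≤ h → 1 ≤ i → i ≤ 2 ^ (h - j) → s j i ≠ 0)
    -- rounding errors: bounded and mean independent
    (δ : ℕ → Ω → ℝ)
    (hδmeas : ∀ t, Measurable (δ t))
    (hδbdd : ∀ t, 1 ≤ t → t ≤ n - 1 → ∀ᵐ ω ∂μ, |δ t ω| ≤ u)
    (hδmean : ∀ t, 1 ≤ t → t ≤ n - 1 →
      μ[δ t | ⨆ r ∈ Set.Icc 1 (t - 1), MeasurableSpace.comap (δ r) inferInstance] =ᵐ[μ] 0)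
    -- computed pairwise sums, errors enumerated level by level
    (shat : ℕ → ℕ → Ω → ℝ)
    (hshat0 : ∀ i, 1 ≤ i → i ≤ n → ∀ ω, shat 0 i ω = x i)
    (hshatrec : ∀ j i, 1 ≤ j → j ≤ h → 1 ≤ i → i ≤ 2 ^ (h - j) → ∀ ω,
      shat j i ω = (shat (j - 1) (2 * i - 1) ω + shat (j - 1) (2 * i) ω) *
        (1 + δ (n - 2 ^ (h - j + 1) + i) ω))
    (K : ℝ) (hK : K = (∑ i ∈ Finset.Icc 1 n, |x i|) / |s h 1|)
    (lam : ℝ) (hlam0 : 0 < lam) (hlam1 : lam < 1) :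
    ENNReal.ofReal (1 - lam) ≤
      μ {ω | |shat h 1 ω - s h 1| / |s h 1| ≤
        K * Real.sqrt (u * ((1 + u) ^ (2 * h) - 1)) * Real.sqrt (Real.log (2 / lam))} := by
  subst hn
  set S := ∑ k ∈ Icc 1 (2 ^ h), |x k|
  set γ := u * ((1 + u) ^ (2 * h) - 1)
  have hexact : IsPairwiseSumTree h x 0 s :=
    ⟨hs0, fun j i hj hjh hi hih ↦ by simp [hsrec j i hj hjh hi hih, childSum]⟩
  have hsubG : HasSubgaussianMGF (fun ω ↦ shat h 1 ω - s h 1) (S ^ 2 * γ / 2).toNNReal μ :=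
    IsPairwiseSumTree.hasSubgaussianMGF_root_sub (Filtration.naturalFromOne δ hδmeas) hu0
      (fun ω ↦ ⟨fun i hi hih ↦ hshat0 i hi hih ω,
        fun j i hj hjh hi hih ↦ hshatrec j i hj hjh hi hih ω⟩)
      hexact (fun _ ↦ Filtration.measurable_naturalFromOne hδmeas)
      (fun t ht ↦ hδbdd t ht.1 ht.2) (fun t ht ↦ hδmean t ht.1 ht.2)
  have hs : 0 < |s h 1| := abs_pos.2 (hsne h 1 hh le_rfl le_rfl (by simp))
  have hS : 0 < S := hs.trans_le (by simpa [hexact.root_eq] using abs_sum_le_sum_abs x _)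
  have hγ : 0 < γ :=
    mul_pos hu0 (sub_pos.2 (one_lt_pow₀ (by linarith) (by omega : 2 * h ≠ 0)))
  have hthreshold : √(2 * ((S ^ 2 * γ / 2).toNNReal : ℝ) * Real.log (2 / lam)) =
      K * √γ * √(Real.log (2 / lam)) * |s h 1| := by
    rw [Real.coe_toNNReal _ (by positivity), hK, show 2 * (S ^ 2 * γ / 2) = S ^ 2 * γ by ring,
      sqrt_mul (by positivity), sqrt_mul (by positivity), sqrt_sq hS.le]
    field_simp
  refine (hsubG.ofReal_one_sub_le_measure_abs_le (Real.toNNReal_pos.2 (by positivity)) hlam0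
    hlam1.le).trans (measure_mono fun ω hω ↦ ?_)
  rw [Set.mem_ofPred_eq, hthreshold] at hω
  exact (div_le_iff₀ hs).2 hω

/-- Probabilistic error bound for pairwise (balanced binary tree) summation of `n = 2^h`
numbers under stochastic rounding, with condition number `K = (Σ|x_i|)/|Σ x_i|` and
`γ_N(u) = (1+u)^N − 1`. The rounding errors `δ_t` are bounded by the unit roundoff `u`
and mean independent: `E[δ_t | δ_1,…,δ_{t−1}] = 0`. -/
theorem pairwise_summation_sr_bound
    {Ω : Type*} {m0 : MeasurableSpace Ω} (μ : Measure Ω) [IsProbabilityMeasure μ]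
    (h : ℕ) (hh : 1 ≤ h) (n : ℕ) (hn : n = 2 ^ h)
    (u : ℝ) (hu0 : 0 < u) (hu1 : u < 1)
    (x : ℕ → ℝ)
    -- exact partial sums
    (s : ℕ → ℕ → ℝ)
    (hs0 : ∀ i, 1 ≤ i → i ≤ n → s 0 i = x i)
    (hsrec : ∀ j i, 1 ≤ j → j ≤ h → 1 ≤ i → i ≤ 2 ^ (h - j) →
      s j i = s (j - 1) (2 * i - 1) + s (j - 1) (2 * i))
    (hsne : ∀ j i, 1 ≤ j → j ≤ h → 1 ≤ i → i ≤ 2 ^ (h - j) → s j i ≠ 0)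
    -- rounding errors: bounded and mean independent
    (δ : ℕ → Ω → ℝ)
    (hδmeas : ∀ t, Measurable (δ t))
    (hδbdd : ∀ t, 1 ≤ t → t ≤ n - 1 → ∀ᵐ ω ∂μ, |δ t ω| ≤ u)
    (hδmean : ∀ t, 1 ≤ t → t ≤ n - 1 →
      μ[δ t | ⨆ r ∈ Set.Icc 1 (t - 1), MeasurableSpace.comap (δ r) inferInstance] =ᵐ[μ] 0)
    -- computed pairwise sums, errors enumerated level by level
    (shat : ℕ → ℕ → Ω → ℝ)
    (hshat0 : ∀ i, 1 ≤ i → i ≤ n → ∀ ω, shat 0 i ω = x i)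
    (hshatrec : ∀ j i, 1 ≤ j → j ≤ h → 1 ≤ i → i ≤ 2 ^ (h - j) → ∀ ω,
      shat j i ω = (shat (j - 1) (2 * i - 1) ω + shat (j - 1) (2 * i) ω) *
        (1 + δ (n - 2 ^ (h - j + 1) + i) ω))
    (K : ℝ) (hK : K = (∑ i ∈ Finset.Icc 1 n, |x i|) / |s h 1|)
    (lam : ℝ) (hlam0 : 0 < lam) (hlam1 : lam < 1) :
    ENNReal.ofReal (1 - lam) ≤
      μ {ω | |shat h 1 ω - s h 1| / |s h 1| ≤
        K * Real.sqrt (u * ((1 + u) ^ (2 * h) - 1)) * Real.sqrt (Real.log (2 / lam))} :=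
  pairwise_summation_sr_bound_general (m0 := m0) μ h hh n hn u hu0 x s hs0 hsrec hsne δ hδmeas hδbdd
    hδmean shat hshat0 hshatrec K hK lam hlam0 hlam1
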